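/- Let x_1,…,x_n be unit vectors in ℂ^d representing pairwise distinct lines (i.e., |⟨x_i,x_j⟩| < 1 for all i ≠ j), and let w_1,…,w_n be positive weights with ∑_i w_i = 1 such that ∑_{i,j} w_i w_j |⟨x_i,x_j⟩|^4 = 2/(d(d+1)). Then n ≥ d². Moreover, if n = d², then w_i = 1/d² for all i and |⟨x_i,x_j⟩|² = (d·δ_{ij} + 1)/(d+1) for all i, j. -/

import Mathlib

/-!
Identify `d × d` matrices with vectors of `ℂ^(d×d)` carrying the Frobenius inner product, and let
`P_k = x_k x_kᴴ`. The tensor `T = ∑ w_k P_k ⊗ P_k` has `‖T‖² = ∑ w_i w_j |⟪x_i, x_j⟫|⁴`, and its inner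
product with `R = (Id + I ⊗ I) / (d (d + 1))` is `2 / (d (d + 1)) = ‖R‖²`. So equality in the Welch
bound forces `T = R`, and pairing with `f ⊗ g` gives the frame identity
`∑ w_k ⟪f, P_k⟫ conj ⟪g, P_k⟫ = (⟪f, g⟫ + conj (tr f) tr g) / (d (d + 1))`.
Hence no nonzero matrix is orthogonal to every `P_k`, so the `P_k` span the `d²`-dimensional matrix
space. With exactly `d²` points they form a basis, and pairing the frame identity with the dual basis
gives `w_i |⟪x_i, x_j⟫|² d (d + 1) = δ_ij + d w_i`, from which the uniform weights and the SIC
overlaps follow.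
-/

open scoped InnerProductSpace ComplexConjugate

noncomputable section

namespace WeightedDesign

lemma eq_of_inner_eq {𝕜 E : Type*} [RCLike 𝕜] [NormedAddCommGroup E] [InnerProductSpace 𝕜 E]
    {u v : E} {c : 𝕜} (hu : ⟪u, u⟫_𝕜 = c) (huv : ⟪u, v⟫_𝕜 = c) (hv : ⟪v, v⟫_𝕜 = c) : u = v := by
  have hvu : ⟪v, u⟫_𝕜 = c := by rw [← inner_conj_symm, huv, ← hu, inner_conj_symm]
  rw [← sub_eq_zero, ← inner_self_eq_zero (𝕜 := 𝕜), inner_sub_left, inner_sub_right,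
    inner_sub_right, hu, huv, hvu, hv]
  ring

section Vectorization

variable {𝕜 ι : Type*} [RCLike 𝕜] [Fintype ι]

/-- The matrix `f gᴴ`, with entries indexed by `(row, column)`. -/
def outer (f g : EuclideanSpace 𝕜 ι) : EuclideanSpace 𝕜 (ι × ι) :=
  WithLp.toLp 2 fun r => f r.1 * conj (g r.2)

def trace (u : EuclideanSpace 𝕜 (ι × ι)) : 𝕜 := ∑ t, u (t, t)

def identityVec [DecidableEq ι] : EuclideanSpace 𝕜 (ι × ι) :=
  WithLp.toLp 2 fun r => if r.1 = r.2 then 1 else 0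

lemma inner_outer_outer (f g a b : EuclideanSpace 𝕜 ι) :
    ⟪outer f g, outer a b⟫_𝕜 = ⟪f, a⟫_𝕜 * conj ⟪g, b⟫_𝕜 := by
  simp only [PiLp.inner_apply, RCLike.inner_apply, outer, Fintype.sum_prod_type, map_sum,
    Finset.sum_mul_sum, map_mul, RCLike.conj_conj]
  refine Finset.sum_congr rfl fun _ _ => Finset.sum_congr rfl fun _ _ => ?_
  ring

lemma inner_outer_self_outer_self (a b : EuclideanSpace 𝕜 ι) :
    ⟪outer a a, outer b b⟫_𝕜 = ((‖⟪a, b⟫_𝕜‖ ^ 2 : ℝ) : 𝕜) := by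
  rw [inner_outer_outer, RCLike.mul_conj, RCLike.ofReal_pow]

lemma trace_outer (f g : EuclideanSpace 𝕜 ι) : trace (outer f g) = ⟪g, f⟫_𝕜 := by
  simp only [trace, outer, PiLp.inner_apply, RCLike.inner_apply]

variable [DecidableEq ι]

lemma inner_identityVec_right (u : EuclideanSpace 𝕜 (ι × ι)) :
    ⟪u, identityVec⟫_𝕜 = conj (trace u) := by
  simp [PiLp.inner_apply, identityVec, trace, Fintype.sum_prod_type]

lemma trace_identityVec : trace (identityVec : EuclideanSpace 𝕜 (ι × ι)) = Fintype.card ι := by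
  simp [trace, identityVec]

def symTensor : EuclideanSpace 𝕜 ((ι × ι) × (ι × ι)) :=
  identityVec + outer identityVec identityVec

lemma inner_outer_symTensor (f g : EuclideanSpace 𝕜 (ι × ι)) :
    ⟪outer f g, symTensor⟫_𝕜 = ⟪f, g⟫_𝕜 + conj (trace f) * trace g := by
  rw [symTensor, inner_add_right, inner_identityVec_right, trace_outer, inner_conj_symm,
    inner_outer_outer, inner_identityVec_right, inner_identityVec_right, RCLike.conj_conj]

lemma inner_symTensor_self :
    ⟪(symTensor : EuclideanSpace 𝕜 ((ι × ι) × (ι × ι))), symTensor⟫_𝕜 =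
      2 * Fintype.card ι * (Fintype.card ι + 1) := by
  conv_lhs => rw [symTensor, inner_add_left, inner_add_right]
  rw [← symTensor, inner_outer_symTensor, inner_identityVec_right, ← inner_conj_symm,
    inner_identityVec_right, trace_outer, inner_identityVec_right, trace_identityVec,
    trace_identityVec]
  simp only [Fintype.card_prod, Nat.cast_mul, map_mul, map_natCast]
  ring

end Vectorization

section Design

variable {ι κ : Type*} [Fintype ι] [Fintype κ]

structure IsTwoDesign (x : κ → EuclideanSpace ℂ ι) (w : κ → ℝ) : Prop where
  norm_eq_one : ∀ k, ‖x k‖ = 1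
  sum_weight : ∑ k, w k = 1
  frame_potential : ∑ i, ∑ j, w i * w j * ‖⟪x i, x j⟫_ℂ‖ ^ 4 =
    2 / (Fintype.card ι * (Fintype.card ι + 1))

variable (x : κ → EuclideanSpace ℂ ι) (w : κ → ℝ)

def frameTensor : EuclideanSpace ℂ ((ι × ι) × (ι × ι)) :=
  ∑ k, (w k : ℂ) • outer (outer (x k) (x k)) (outer (x k) (x k))

lemma inner_outer_frameTensor (f g : EuclideanSpace ℂ (ι × ι)) :
    ⟪outer f g, frameTensor x w⟫_ℂ =
      ∑ k, (w k : ℂ) * (⟪f, outer (x k) (x k)⟫_ℂ * conj ⟪g, outer (x k) (x k)⟫_ℂ) := by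
  simp only [frameTensor, inner_sum, inner_smul_right, inner_outer_outer]

lemma inner_frameTensor_self :
    ⟪frameTensor x w, frameTensor x w⟫_ℂ = ((∑ i, ∑ j, w i * w j * ‖⟪x i, x j⟫_ℂ‖ ^ 4 : ℝ) : ℂ) := by
  simp only [frameTensor, sum_inner, inner_sum, inner_smul_left, inner_smul_right,
    inner_outer_outer, Complex.mul_conj', Complex.conj_ofReal, map_pow, Finset.mul_sum]
  push_cast
  refine Finset.sum_congr rfl fun i _ => Finset.sum_congr rfl fun j _ => ?_
  rw [norm_inner_symm]
  ring

variable {x w}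

namespace IsTwoDesign

variable (hD : IsTwoDesign x w)
include hD

lemma inner_self_eq_one (k : κ) : ⟪x k, x k⟫_ℂ = 1 := by
  rw [inner_self_eq_norm_sq_to_K, hD.norm_eq_one]
  simp

lemma trace_outer_self (k : κ) : trace (outer (x k) (x k)) = 1 := by
  rw [trace_outer, hD.inner_self_eq_one]

variable [DecidableEq ι]

lemma inner_frameTensor_symTensor : ⟪frameTensor x w, symTensor⟫_ℂ = 2 := by
  simp only [frameTensor, sum_inner, inner_smul_left, inner_outer_symTensor,
    inner_outer_self_outer_self, hD.inner_self_eq_one, hD.trace_outer_self, Complex.conj_ofReal]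
  rw [← Finset.sum_mul, ← Complex.ofReal_sum, hD.sum_weight]
  norm_num

lemma frameTensor_eq [Nonempty ι] :
    frameTensor x w = ((Fintype.card ι * (Fintype.card ι + 1) : ℂ))⁻¹ • symTensor := by
  have hd : (Fintype.card ι * (Fintype.card ι + 1) : ℂ) ≠ 0 := by
    norm_cast
    positivity
  apply eq_of_inner_eq (c := 2 / (Fintype.card ι * (Fintype.card ι + 1) : ℂ))
  · rw [inner_frameTensor_self, hD.frame_potential]
    push_cast
    rfl
  · rw [inner_smul_right, hD.inner_frameTensor_symTensor]
    field_simp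
  · rw [inner_smul_left, inner_smul_right, inner_symTensor_self]
    simp only [map_inv₀, map_mul, map_add, map_natCast, map_one]
    field_simp

lemma sum_mul_inner_mul_conj_inner [Nonempty ι] (f g : EuclideanSpace ℂ (ι × ι)) :
    ∑ k, (w k : ℂ) * (⟪f, outer (x k) (x k)⟫_ℂ * conj ⟪g, outer (x k) (x k)⟫_ℂ) =
      (⟪f, g⟫_ℂ + conj (trace f) * trace g) / (Fintype.card ι * (Fintype.card ι + 1)) := by
  rw [← inner_outer_frameTensor, hD.frameTensor_eq, inner_smul_right, inner_outer_symTensor,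
    inv_mul_eq_div]

end IsTwoDesign

def analysisOp (x : κ → EuclideanSpace ℂ ι) : EuclideanSpace ℂ (ι × ι) →ₗ[ℂ] κ → ℂ :=
  LinearMap.pi fun k => innerₛₗ ℂ (outer (x k) (x k))

omit [Fintype κ] in
lemma analysisOp_apply (A : EuclideanSpace ℂ (ι × ι)) (k : κ) :
    analysisOp x A k = ⟪outer (x k) (x k), A⟫_ℂ := rfl

namespace IsTwoDesign

variable (hD : IsTwoDesign x w) [DecidableEq ι] [Nonempty ι]
include hD

lemma analysisOp_injective : Function.Injective (analysisOp x) := by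
  rw [← LinearMap.ker_eq_bot, LinearMap.ker_eq_bot']
  intro A hA
  have horth : ∀ k, ⟪A, outer (x k) (x k)⟫_ℂ = 0 := fun k => by
    rw [← inner_conj_symm, ← analysisOp_apply, hA, Pi.zero_apply, map_zero]
  have hframe := hD.sum_mul_inner_mul_conj_inner A A
  simp only [horth, zero_mul, mul_zero, Finset.sum_const_zero, eq_comm (a := (0 : ℂ)), div_eq_zero_iff,
    inner_self_eq_norm_sq_to_K, RCLike.conj_mul] at hframe
  have hnorm : ‖A‖ ^ 2 + ‖trace A‖ ^ 2 = 0 := by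
    have h := hframe.resolve_right (by norm_cast; positivity)
    rwa [← RCLike.ofReal_pow, ← RCLike.ofReal_pow, ← RCLike.ofReal_add, RCLike.ofReal_eq_zero] at h
  have : ‖A‖ ^ 2 = 0 := by nlinarith [sq_nonneg ‖A‖, sq_nonneg ‖trace A‖]
  simpa using this

theorem card_sq_le_card : Fintype.card ι ^ 2 ≤ Fintype.card κ := by
  simpa [sq] using LinearMap.finrank_le_finrank_of_injective hD.analysisOp_injective

variable [DecidableEq κ] (hcard : Fintype.card κ = Fintype.card ι ^ 2)
include hcard

lemma exists_dual (i : κ) :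
    ∃ Q : EuclideanSpace ℂ (ι × ι), ∀ k, ⟪Q, outer (x k) (x k)⟫_ℂ = if k = i then 1 else 0 := by
  have hbij : Function.Surjective (analysisOp x) := by
    refine (LinearMap.injective_iff_surjective_of_finrank_eq_finrank ?_).mp
      hD.analysisOp_injective
    simp [hcard, sq]
  obtain ⟨Q, hQ⟩ := hbij (Pi.single i 1)
  refine ⟨Q, fun k => ?_⟩
  rw [← inner_conj_symm, ← analysisOp_apply, hQ, Pi.single_apply]
  split_ifs <;> simp

lemma weight_mul_norm_inner_sq (i j : κ) :
    w i * ‖⟪x i, x j⟫_ℂ‖ ^ 2 * Fintype.card ι * (Fintype.card ι + 1) =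
      (if i = j then 1 else 0) + w i * Fintype.card ι := by
  obtain ⟨Q, hQ⟩ := hD.exists_dual hcard i
  have hframe (g : EuclideanSpace ℂ (ι × ι)) :
      (w i : ℂ) * conj ⟪g, outer (x i) (x i)⟫_ℂ =
        (⟪Q, g⟫_ℂ + conj (trace Q) * trace g) / (Fintype.card ι * (Fintype.card ι + 1)) := by
    rw [← hD.sum_mul_inner_mul_conj_inner]
    simp [hQ]
  have hd : (Fintype.card ι * (Fintype.card ι + 1) : ℂ) ≠ 0 := by
    norm_cast
    positivity
  have htrace : conj (trace Q) = Fintype.card ι * w i := by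
    have h := hframe identityVec
    rw [inner_conj_symm, inner_identityVec_right, hD.trace_outer_self, inner_identityVec_right,
      trace_identityVec] at h
    rw [map_one, mul_one, eq_div_iff hd] at h
    refine mul_right_cancel₀ (b := (Fintype.card ι + 1 : ℂ)) (by norm_cast) ?_
    linear_combination -h
  have h := hframe (outer (x j) (x j))
  rw [inner_conj_symm, inner_outer_self_outer_self, hQ, htrace, hD.trace_outer_self] at h
  field_simp at h
  simp only [eq_comm (a := j), RCLike.ofReal_eq_complex_ofReal] at h
  split_ifs at h ⊢ <;> exact_mod_cast h

end IsTwoDesign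

end Design

end WeightedDesign

end

theorem two_design_card_ge_d_sq (d n : ℕ) (hd : 0 < d)
    (x : Fin n → EuclideanSpace ℂ (Fin d)) (hx : ∀ i, ‖x i‖ = 1)
    (w : Fin n → ℝ) (hsum : ∑ i, w i = 1)
    (hdesign : ∑ i, ∑ j, w i * w j * ‖(inner ℂ (x i) (x j) : ℂ)‖ ^ 4 = 2 / (d * (d + 1))) :
    d ^ 2 ≤ n ∧
      (n = d ^ 2 →
        (∀ i, w i = ((d : ℝ) ^ 2)⁻¹) ∧
        (∀ i j, ‖(inner ℂ (x i) (x j) : ℂ)‖ ^ 2 =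
          (d * (if i = j then (1 : ℝ) else 0) + 1) / (d + 1))) := by
  have hD : WeightedDesign.IsTwoDesign x w := ⟨hx, hsum, by simpa using hdesign⟩
  have : Nonempty (Fin d) := Fin.pos_iff_nonempty.mp hd
  refine ⟨by simpa using hD.card_sq_le_card, fun hn => ?_⟩
  have key := hD.weight_mul_norm_inner_sq (by simpa using hn)
  simp only [Fintype.card_fin] at key
  have hweight (i : Fin n) : w i = ((d : ℝ) ^ 2)⁻¹ := by
    have h := key i i
    rw [if_pos rfl, hD.inner_self_eq_one, norm_one, one_pow, mul_one] at h
    field_simp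
    linarith
  refine ⟨hweight, fun i j => ?_⟩
  have h := key i j
  rw [hweight] at h
  field_simp at h ⊢
  split_ifs at h ⊢ <;> linarith
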